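/- Let f : (-ε₁, ε₁)^d → (-ε₀, ε₀) be Lipschitz with constant C_f, and let U_< = {(x₀, x) : x ∈ (-ε₁,ε₁)^d, x₀ < f(x)} ⊆ ℝ^{d+1}. Then for any two points y = (y₀, ȳ) and z = (z₀, z̄) in U_<, there exists a piecewise C¹ curve σ : [0,1] → U_< from y to z whose Euclidean length satisfies L(σ) ≤ √(1 + C_f²) · ‖y - z‖ + |y₀ - z₀|. In particular, U_< is quasiconvex. -/

import Mathlib

/-! Write `D = z̄ - ȳ`. Along the horizontal segment `ȳ + s D`, the Lipschitz bound keeps `f`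
above both cones `y₀ - s C‖D‖` and `z₀ - (1 - s) C‖D‖`. With `K = max (C‖D‖) |y₀ - z₀|`, the
broken line that descends from `y` with vertical slope `K` and then climbs to `z` with slope `K`
therefore stays in the strict subgraph: its first piece lies below the first cone, its second
piece below the second. Both pieces have speed `√(K² + ‖D‖²) ≤ √(1 + C²) ‖y - z‖`. -/

open Set

noncomputable section

/-- Euclidean length of a curve on `[0,1]`. -/
def euclLength {m : ℕ} (σ : ℝ → EuclideanSpace ℝ (Fin m)) : ℝ :=
  ∫ s in (0:ℝ)..1, ‖deriv σ s‖

/-- A piecewise `C¹` curve on `[0,1]`: continuous, and `C¹` away from finitely many points. -/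
def PiecewiseC1On {m : ℕ} (σ : ℝ → EuclideanSpace ℝ (Fin m)) : Prop :=
  ContinuousOn σ (Icc 0 1) ∧
    ∃ T : Finset ℝ, ∀ s ∈ Icc (0:ℝ) 1 \ (T : Set ℝ), ∃ ε > (0:ℝ),
      ContDiffOn ℝ 1 σ (Ioo (s - ε) (s + ε))

namespace EuclideanSpace

variable {d : ℕ}

def tail (p : EuclideanSpace ℝ (Fin (d + 1))) : EuclideanSpace ℝ (Fin d) :=
  WithLp.toLp 2 fun i => p i.succ

def cons (t : ℝ) (x : EuclideanSpace ℝ (Fin d)) : EuclideanSpace ℝ (Fin (d + 1)) :=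
  WithLp.toLp 2 (Fin.cons t x.ofLp)

@[simp] lemma tail_apply (p : EuclideanSpace ℝ (Fin (d + 1))) (i : Fin d) :
    tail p i = p i.succ := rfl
@[simp] lemma tail_add (p q : EuclideanSpace ℝ (Fin (d + 1))) :
    tail (p + q) = tail p + tail q := rfl
@[simp] lemma tail_sub (p q : EuclideanSpace ℝ (Fin (d + 1))) :
    tail (p - q) = tail p - tail q := rfl
@[simp] lemma tail_smul (c : ℝ) (p : EuclideanSpace ℝ (Fin (d + 1))) :
    tail (c • p) = c • tail p := rfl
@[simp] lemma cons_apply_zero (t : ℝ) (x : EuclideanSpace ℝ (Fin d)) : cons t x 0 = t := rfl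
@[simp] lemma tail_cons (t : ℝ) (x : EuclideanSpace ℝ (Fin d)) : tail (cons t x) = x := rfl

lemma ext_zero_tail {p q : EuclideanSpace ℝ (Fin (d + 1))} (h0 : p 0 = q 0) (ht : tail p = tail q) :
    p = q := by
  ext i
  induction i using Fin.cases with
  | zero => exact h0
  | succ i => exact congrArg (· i) ht

lemma norm_sq_eq_sq_add_norm_tail_sq (p : EuclideanSpace ℝ (Fin (d + 1))) :
    ‖p‖ ^ 2 = p 0 ^ 2 + ‖tail p‖ ^ 2 := by
  simp [EuclideanSpace.real_norm_sq_eq, Fin.sum_univ_succ]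

lemma norm_cons (t : ℝ) (x : EuclideanSpace ℝ (Fin d)) : ‖cons t x‖ = √(t ^ 2 + ‖x‖ ^ 2) := by
  have h := norm_sq_eq_sq_add_norm_tail_sq (cons t x)
  rw [cons_apply_zero, tail_cons] at h
  rw [← h, Real.sqrt_sq (norm_nonneg _)]

end EuclideanSpace

section Curves

variable {m : ℕ}

lemma piecewiseC1On_if_le {γ₁ γ₂ : ℝ → EuclideanSpace ℝ (Fin m)} {t : ℝ}
    (h₁ : ContDiff ℝ 1 γ₁) (h₂ : ContDiff ℝ 1 γ₂) (ht : γ₁ t = γ₂ t) :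
    PiecewiseC1On fun s => if s ≤ t then γ₁ s else γ₂ s := by
  refine ⟨(h₁.continuous.if_le h₂.continuous continuous_id continuous_const
    fun s (hs : s = t) => hs ▸ ht).continuousOn, {t}, fun s ⟨_, hst⟩ => ?_⟩
  rcases (Ne.symm (by simpa using hst) : t ≠ s).lt_or_gt with hts | hst
  · refine ⟨s - t, sub_pos.2 hts, h₂.contDiffOn.congr fun r hr => if_neg ?_⟩
    linarith [hr.1]
  · refine ⟨t - s, sub_pos.2 hst, h₁.contDiffOn.congr fun r hr => if_pos ?_⟩
    linarith [hr.2]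

lemma norm_deriv_if_le {γ₁ γ₂ : ℝ → EuclideanSpace ℝ (Fin m)} {t L : ℝ}
    (h₁ : ∀ s, ‖deriv γ₁ s‖ = L) (h₂ : ∀ s, ‖deriv γ₂ s‖ = L) {s : ℝ} (hs : s ≠ t) :
    ‖deriv (fun s => if s ≤ t then γ₁ s else γ₂ s) s‖ = L := by
  rcases hs.lt_or_gt with hst | hts
  · have : (fun s => if s ≤ t then γ₁ s else γ₂ s) =ᶠ[nhds s] γ₁ := by
      filter_upwards [Iio_mem_nhds hst] with r hr using if_pos hr.le
    rw [this.deriv_eq, h₁]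
  · have : (fun s => if s ≤ t then γ₁ s else γ₂ s) =ᶠ[nhds s] γ₂ := by
      filter_upwards [Ioi_mem_nhds hts] with r hr using if_neg (not_le.2 hr)
    rw [this.deriv_eq, h₂]

lemma euclLength_eq_of_norm_deriv_eq {σ : ℝ → EuclideanSpace ℝ (Fin m)} {T : Set ℝ}
    (hT : T.Countable) {L : ℝ} (h : ∀ s ∉ T, ‖deriv σ s‖ = L) : euclLength σ = L := by
  have hae : ∀ᵐ s : ℝ, s ∈ uIoc (0 : ℝ) 1 → ‖deriv σ s‖ = L := by
    filter_upwards [MeasureTheory.measure_eq_zero_iff_ae_notMem.1 (hT.measure_zero _)] with s hs _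
    exact h s hs
  rw [euclLength, intervalIntegral.integral_congr_ae hae]
  simp

lemma euclLength_if_le {γ₁ γ₂ : ℝ → EuclideanSpace ℝ (Fin m)} {t L : ℝ}
    (h₁ : ∀ s, ‖deriv γ₁ s‖ = L) (h₂ : ∀ s, ‖deriv γ₂ s‖ = L) :
    euclLength (fun s => if s ≤ t then γ₁ s else γ₂ s) = L :=
  euclLength_eq_of_norm_deriv_eq (countable_singleton t) fun _ hs => norm_deriv_if_le h₁ h₂ hs

end Curves

lemma deriv_const_add_smul {E : Type*} [NormedAddCommGroup E] [NormedSpace ℝ E] (p v : E) (s : ℝ) :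
    deriv (fun s : ℝ => p + s • v) s = v := by
  simpa using (((hasDerivAt_id s).smul_const v).const_add p).deriv

lemma sub_le_apply_add_smul_sub {E : Type*} [SeminormedAddCommGroup E] [NormedSpace ℝ E]
    {S : Set E} {f : E → ℝ} {C : ℝ} (hS : Convex ℝ S)
    (hf : ∀ x ∈ S, ∀ y ∈ S, |f x - f y| ≤ C * ‖x - y‖) {x x' : E} (hx : x ∈ S) (hx' : x' ∈ S)
    {s : ℝ} (hs : s ∈ Icc 0 1) : f x - s * (C * ‖x' - x‖) ≤ f (x + s • (x' - x)) := by
  have h := hf _ (hS.add_smul_sub_mem hx hx' hs) x hx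
  rw [add_sub_cancel_left, norm_smul, Real.norm_of_nonneg hs.1] at h
  linarith [(abs_le.1 h).1]

lemma exists_mem_Icc_two_mul_eq {a K : ℝ} (h : |a| ≤ K) :
    ∃ t ∈ Icc (0 : ℝ) 1, 2 * K * t = a + K := by
  obtain ⟨haK, haK'⟩ := abs_le.1 h
  rcases (abs_nonneg a |>.trans h).eq_or_lt with hK0 | hK0
  · exact ⟨0, ⟨le_rfl, zero_le_one⟩, by linarith⟩
  · refine ⟨(a + K) / (2 * K),
      ⟨div_nonneg (by linarith) (by linarith), div_le_one_of_le₀ (by linarith) (by linarith)⟩, ?_⟩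
    field_simp

lemma sqrt_sq_max_add_sq_le (C a b : ℝ) :
    √(max (C * b) |a| ^ 2 + b ^ 2) ≤ √(1 + C ^ 2) * √(a ^ 2 + b ^ 2) := by
  rw [← Real.sqrt_mul (by positivity)]
  refine Real.sqrt_le_sqrt ?_
  have hmax : max (C * b) |a| ^ 2 ≤ (C * b) ^ 2 + a ^ 2 := by
    rcases max_choice (C * b) |a| with h | h <;> rw [h]
    · nlinarith [sq_nonneg a]
    · nlinarith [sq_abs a, sq_nonneg (C * b)]
  nlinarith [mul_nonneg (sq_nonneg C) (sq_nonneg a)]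

open EuclideanSpace

section Subgraph

variable {d : ℕ} {S : Set (EuclideanSpace ℝ (Fin d))} {f : EuclideanSpace ℝ (Fin d) → ℝ} {C : ℝ}

def strictSubgraph (S : Set (EuclideanSpace ℝ (Fin d))) (f : EuclideanSpace ℝ (Fin d) → ℝ) :
    Set (EuclideanSpace ℝ (Fin (d + 1))) :=
  {p | tail p ∈ S ∧ p 0 < f (tail p)}

lemma mem_strictSubgraph_of_apply_zero_le (hS : Convex ℝ S)
    (hf : ∀ x ∈ S, ∀ y ∈ S, |f x - f y| ≤ C * ‖x - y‖) {y z p : EuclideanSpace ℝ (Fin (d + 1))}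
    (hy : y ∈ strictSubgraph S f) (hz : z ∈ strictSubgraph S f) {s : ℝ} (hs : s ∈ Icc 0 1)
    (htail : tail p = tail y + s • (tail z - tail y))
    (h0 : p 0 ≤ y 0 - s * (C * ‖tail z - tail y‖)) : p ∈ strictSubgraph S f := by
  refine ⟨htail ▸ hS.add_smul_sub_mem hy.1 hz.1 hs, ?_⟩
  rw [htail]
  linarith [hy.2, sub_le_apply_add_smul_sub hS hf hy.1 hz.1 hs]

theorem exists_path_mem_strictSubgraph (hS : Convex ℝ S)
    (hf : ∀ x ∈ S, ∀ y ∈ S, |f x - f y| ≤ C * ‖x - y‖) {y z : EuclideanSpace ℝ (Fin (d + 1))}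
    (hy : y ∈ strictSubgraph S f) (hz : z ∈ strictSubgraph S f) :
    ∃ σ : ℝ → EuclideanSpace ℝ (Fin (d + 1)), PiecewiseC1On σ ∧ σ 0 = y ∧ σ 1 = z ∧
      (∀ s ∈ Icc (0 : ℝ) 1, σ s ∈ strictSubgraph S f) ∧
      euclLength σ ≤ √(1 + C ^ 2) * ‖y - z‖ := by
  set D := tail z - tail y with hD
  set K := max (C * ‖D‖) |y 0 - z 0|
  have hKc : C * ‖D‖ ≤ K := le_max_left _ _
  have hK0 : 0 ≤ K := (abs_nonneg _).trans (le_max_right _ _)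
  obtain ⟨t, ⟨ht0, ht1⟩, hKt⟩ := exists_mem_Icc_two_mul_eq (le_max_right (C * ‖D‖) _)
  set γ₁ : ℝ → EuclideanSpace ℝ (Fin (d + 1)) := fun s => y + s • cons (-K) D
  set γ₂ : ℝ → EuclideanSpace ℝ (Fin (d + 1)) := fun s => (z - cons K D) + s • cons K D
  have hγ : γ₁ t = γ₂ t := ext_zero_tail (by simp [γ₁, γ₂]; linarith) (by simp [γ₁, γ₂, hD])
  have hσ1 : (if (1 : ℝ) ≤ t then γ₁ 1 else γ₂ 1) = z := by
    rcases ht1.lt_or_eq with h | h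
    · simp [not_le.2 h, γ₂]
    · rw [if_pos h.ge, ← h, hγ]
      simp [γ₂, h]
  have hnorm_deriv : ∀ v : EuclideanSpace ℝ (Fin (d + 1)), ∀ k, |k| = K →
      ∀ s : ℝ, ‖deriv (fun s : ℝ => v + s • cons k D) s‖ = √(K ^ 2 + ‖D‖ ^ 2) := by
    intro v k hk s
    rw [deriv_const_add_smul, norm_cons, ← sq_abs, hk]
  refine ⟨fun s => if s ≤ t then γ₁ s else γ₂ s, piecewiseC1On_if_le (by fun_prop) (by fun_prop) hγ,
    by simp [ht0, γ₁], hσ1, fun s hs => ?_, ?_⟩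
  · beta_reduce
    split_ifs with hst
    · refine mem_strictSubgraph_of_apply_zero_le hS hf hy hz hs (by simp [γ₁, hD]) ?_
      simp only [γ₁, PiLp.add_apply, PiLp.smul_apply, cons_apply_zero, smul_eq_mul]
      nlinarith [hs.1]
    · refine mem_strictSubgraph_of_apply_zero_le hS hf hz hy (s := 1 - s)
        ⟨by linarith [hs.2], by linarith [hs.1]⟩
        (by simp only [γ₂, tail_add, tail_sub, tail_smul, tail_cons, hD]; module) ?_
      simp only [γ₂, PiLp.add_apply, PiLp.sub_apply, PiLp.smul_apply, cons_apply_zero, smul_eq_mul]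
      rw [norm_sub_rev, ← hD]
      nlinarith [hs.2]
  · have hyz : ‖y - z‖ = √((y 0 - z 0) ^ 2 + ‖D‖ ^ 2) := by
      rw [← Real.sqrt_sq (norm_nonneg (y - z)), norm_sq_eq_sq_add_norm_tail_sq, tail_sub,
        norm_sub_rev]
      rfl
    rw [euclLength_if_le (hnorm_deriv y (-K) (by simp [hK0])) (hnorm_deriv _ K (abs_of_nonneg hK0)),
      hyz]
    exact sqrt_sq_max_add_sq_le C _ _

end Subgraph

lemma convex_setOf_forall_abs_lt {ι : Type*} (ε : ℝ) :
    Convex ℝ {x : EuclideanSpace ℝ ι | ∀ i, |x i| < ε} := by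
  simp_rw [ofPred_forall, abs_lt]
  exact convex_iInter fun i =>
    (convex_Ioo (-ε) ε).linear_preimage (EuclideanSpace.proj i).toLinearMap

theorem stmt3 {d : ℕ} (ε₁ Cf : ℝ)
    (f : EuclideanSpace ℝ (Fin d) → ℝ)
    (hLip : ∀ x y : EuclideanSpace ℝ (Fin d), (∀ i, |x i| < ε₁) → (∀ i, |y i| < ε₁) →
      |f x - f y| ≤ Cf * ‖x - y‖) :
    ∀ y z : EuclideanSpace ℝ (Fin (d+1)),
      ((∀ i : Fin d, |y i.succ| < ε₁) ∧ y 0 < f (WithLp.toLp 2 (fun i : Fin d => y i.succ))) →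
      ((∀ i : Fin d, |z i.succ| < ε₁) ∧ z 0 < f (WithLp.toLp 2 (fun i : Fin d => z i.succ))) →
      ∃ σ : ℝ → EuclideanSpace ℝ (Fin (d+1)),
        PiecewiseC1On σ ∧ σ 0 = y ∧ σ 1 = z ∧
        (∀ s ∈ Icc (0:ℝ) 1,
          (∀ i : Fin d, |σ s i.succ| < ε₁) ∧ σ s 0 < f (WithLp.toLp 2 (fun i : Fin d => σ s i.succ))) ∧
        euclLength σ ≤ Real.sqrt (1 + Cf ^ 2) * ‖y - z‖ + |y 0 - z 0| := by
  intro y z hy hz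
  obtain ⟨σ, hσ, hσ0, hσ1, hσU, hnorm_deriv⟩ := exists_path_mem_strictSubgraph
    (convex_setOf_forall_abs_lt ε₁) (fun x hx x' hx' => hLip x x' hx hx') hy hz
  exact ⟨σ, hσ, hσ0, hσ1, hσU, hnorm_deriv.trans (le_add_of_nonneg_right (abs_nonneg _))⟩
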